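/- Let Φ be an m×n real matrix, b ∈ ℝᵐ, η ≥ 0, and let x* ∈ ℝⁿ be a solution of the noisy problem (P₀^η): ‖Φx* − b‖₂² ≤ η² and ‖x*‖₀ ≤ ‖x‖₀ for every x with ‖Φx − b‖₂² ≤ η². Let ŵ ∈ ℝⁿ satisfy ŵᵢ ≥ 0 for all i and (ŵᵢ = 0 ⟺ x*ᵢ ≠ 0). Then every minimizer x^ŵ of the noisy weighted ℓ₁ problem (i.e., ‖Φx^ŵ − b‖₂² ≤ η² and Σᵢ ŵᵢ|x^ŵᵢ| ≤ Σᵢ ŵᵢ|xᵢ| for all x with ‖Φx − b‖₂² ≤ η²) is itself a solution of (P₀^η): ‖x^ŵ‖₀ ≤ ‖x‖₀ for every x with ‖Φx − b‖₂² ≤ η². -/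

import Mathlib

/-!
Since `ŵ` vanishes on the support of `x*`, the weighted ℓ₁ norm of `x*` is `0`, so the weighted
ℓ₁ minimizer `x^ŵ` has weighted ℓ₁ norm `0` as well. With `ŵ ≥ 0` this forces `x^ŵ` to vanish
wherever `ŵ > 0`, i.e. off the support of `x*`; hence `‖x^ŵ‖₀ ≤ ‖x*‖₀`, and `x*` is ℓ₀-minimal.
-/

noncomputable def normZero {n : ℕ} (x : Fin n → ℝ) : ℕ :=
  (Finset.univ.filter fun i => x i ≠ 0).card

open Finset

theorem weighted_l1_eq_zero_iff {ι : Type*} [Fintype ι] {w x : ι → ℝ} (hw : ∀ i, 0 ≤ w i) :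
    ∑ i, w i * |x i| = 0 ↔ ∀ i, x i ≠ 0 → w i = 0 := by
  rw [sum_eq_zero_iff_of_nonneg fun i _ => mul_nonneg (hw i) (abs_nonneg _)]
  simp only [mem_univ, true_imp_iff, mul_eq_zero, abs_eq_zero]
  exact forall_congr' fun i => or_iff_not_imp_right

theorem normZero_mono {n : ℕ} {x y : Fin n → ℝ} (h : ∀ i, x i ≠ 0 → y i ≠ 0) :
    normZero x ≤ normZero y :=
  card_le_card <| monotone_filter_right _ fun i _ => h i

theorem noisy_weighted_l1_solves_P0_general {m n : ℕ} (Φ : Matrix (Fin m) (Fin n) ℝ)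
    (b : Fin m → ℝ) (η : ℝ)
    (xs : Fin n → ℝ) (hxs : (∑ j, (Φ.mulVec xs j - b j) ^ 2) ≤ η ^ 2)
    (hxs0 : ∀ x : Fin n → ℝ, (∑ j, (Φ.mulVec x j - b j) ^ 2) ≤ η ^ 2 →
      normZero xs ≤ normZero x)
    (wh : Fin n → ℝ) (hwh : ∀ i, 0 ≤ wh i) (hwh0 : ∀ i, wh i = 0 ↔ xs i ≠ 0)
    (xw : Fin n → ℝ)
    (hmin : ∀ x : Fin n → ℝ, (∑ j, (Φ.mulVec x j - b j) ^ 2) ≤ η ^ 2 →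
      ∑ i, wh i * |xw i| ≤ ∑ i, wh i * |x i|) :
    ∀ x : Fin n → ℝ, (∑ j, (Φ.mulVec x j - b j) ^ 2) ≤ η ^ 2 →
      normZero xw ≤ normZero x := by
  intro x hx
  have hxs_l1 : ∑ i, wh i * |xs i| = 0 :=
    (weighted_l1_eq_zero_iff hwh).2 fun i hi => (hwh0 i).2 hi
  have hxw_l1 : ∑ i, wh i * |xw i| = 0 :=
    le_antisymm (hxs_l1 ▸ hmin xs hxs) (sum_nonneg fun i _ => mul_nonneg (hwh i) (abs_nonneg _))
  have hsupport : ∀ i, xw i ≠ 0 → xs i ≠ 0 := fun i hi =>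
    (hwh0 i).1 ((weighted_l1_eq_zero_iff hwh).1 hxw_l1 i hi)
  exact (normZero_mono hsupport).trans (hxs0 x hx)

/-- If `x*` solves the noisy problem (P₀^η) and `ŵ ≥ 0` vanishes exactly on the
support of `x*`, then every minimizer of the noisy weighted ℓ₁ problem with
weights `ŵ` also solves (P₀^η). -/
theorem noisy_weighted_l1_solves_P0 {m n : ℕ} (Φ : Matrix (Fin m) (Fin n) ℝ)
    (b : Fin m → ℝ) (η : ℝ) (hη : 0 ≤ η)
    (xs : Fin n → ℝ) (hxs : (∑ j, (Φ.mulVec xs j - b j) ^ 2) ≤ η ^ 2)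
    (hxs0 : ∀ x : Fin n → ℝ, (∑ j, (Φ.mulVec x j - b j) ^ 2) ≤ η ^ 2 →
      normZero xs ≤ normZero x)
    (wh : Fin n → ℝ) (hwh : ∀ i, 0 ≤ wh i) (hwh0 : ∀ i, wh i = 0 ↔ xs i ≠ 0)
    (xw : Fin n → ℝ) (hxw : (∑ j, (Φ.mulVec xw j - b j) ^ 2) ≤ η ^ 2)
    (hmin : ∀ x : Fin n → ℝ, (∑ j, (Φ.mulVec x j - b j) ^ 2) ≤ η ^ 2 →
      ∑ i, wh i * |xw i| ≤ ∑ i, wh i * |x i|) :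
    ∀ x : Fin n → ℝ, (∑ j, (Φ.mulVec x j - b j) ^ 2) ≤ η ^ 2 →
      normZero xw ≤ normZero x :=
  noisy_weighted_l1_solves_P0_general Φ b η xs hxs hxs0 wh hwh hwh0 xw hmin
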